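/- Let κ₀, κ₁ ∈ ℂ be nonzero, put λⱼ = κⱼ², let bⱼ, cⱼ ∈ ℂ, define ηⱼ(x₊, x₋) = x₊/(2λⱼ) − 2λⱼx₋, ψⱼ = cⱼ − (bⱼ/(2κⱼ))e^{ηⱼ}, φⱼ = cⱼ + (bⱼ/(2κⱼ))e^{ηⱼ} for j = 0, 1, and on the open set of points (x₊, x₋) ∈ ℝ² where λ₀φ₁ψ₀ − λ₁φ₀ψ₁ ≠ 0 define r(x₊, x₋) = (λ₀φ₀ψ₁ − λ₁φ₁ψ₀) / (λ₀φ₁ψ₀ − λ₁φ₀ψ₁). Then at every such point, 4·(r·∂₊∂₋r − (∂₊r)·(∂₋r)) = 1 − r⁴, where ∂± denote ∂/∂x±. -/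

import Mathlib

open Matrix Complex

/-- Partial derivative with respect to the first light-cone coordinate `x₊`. -/
noncomputable def dplus (f : ℝ × ℝ → ℂ) (p : ℝ × ℝ) : ℂ :=
  deriv (fun x => f (x, p.2)) p.1

/-- Partial derivative with respect to the second light-cone coordinate `x₋`. -/
noncomputable def dminus (f : ℝ × ℝ → ℂ) (p : ℝ × ℝ) : ℂ :=
  deriv (fun y => f (p.1, y)) p.2

/-- The linear function `ηⱼ(x₊, x₋) = x₊/(2λⱼ) − 2λⱼx₋`. -/
noncomputable def eta (lam : ℂ) (p : ℝ × ℝ) : ℂ :=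
  (p.1 : ℂ) / (2 * lam) - 2 * lam * (p.2 : ℂ)

/-- `ψⱼ = cⱼ − (bⱼ/(2κⱼ))e^{ηⱼ}`. -/
noncomputable def psiB (κ lam b c : ℂ) (p : ℝ × ℝ) : ℂ :=
  c - (b / (2 * κ)) * exp (eta lam p)

/-- `φⱼ = cⱼ + (bⱼ/(2κⱼ))e^{ηⱼ}`. -/
noncomputable def phiB (κ lam b c : ℂ) (p : ℝ × ℝ) : ℂ :=
  c + (b / (2 * κ)) * exp (eta lam p)

/-- The function `r = e^{iu}`, where `u` is the bosonic body of the two-soliton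
solution `s[2]` of the SUSY sine-Gordon equation. -/
noncomputable def rTwoSoliton (κ₀ lam₀ b₀ c₀ κ₁ lam₁ b₁ c₁ : ℂ) (p : ℝ × ℝ) : ℂ :=
  (lam₀ * phiB κ₀ lam₀ b₀ c₀ p * psiB κ₁ lam₁ b₁ c₁ p -
      lam₁ * phiB κ₁ lam₁ b₁ c₁ p * psiB κ₀ lam₀ b₀ c₀ p) /
    (lam₀ * phiB κ₁ lam₁ b₁ c₁ p * psiB κ₀ lam₀ b₀ c₀ p -
      lam₁ * phiB κ₀ lam₀ b₀ c₀ p * psiB κ₁ lam₁ b₁ c₁ p)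

/-!
Write `r = N / D` with the tau functions `N = τ(a)` and `D = τ(-a)`, where `aⱼ = bⱼ/(2κⱼ)` and
`τ(a) = A + B e^{η₀} + C e^{η₁} + F e^{η₀+η₁}` has coefficients bilinear in `a` and `c`.
For `h(f) = f ∂₊∂₋f − ∂₊f ∂₋f = f² ∂₊∂₋ log f` the quotient rule reads
`h(N/D) = (D² h(N) − N² h(D)) / D⁴`, so the claim follows from the Hirota bilinear form
`4 h(N) = D² − N²`, `4 h(D) = N² − D²` of the sine-Gordon equation:
`4 h(N/D) = (D²(D² − N²) − N²(N² − D²)) / D⁴ = 1 − r⁴`.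
Because `∂₊ηⱼ ∂₋ηⱼ = −1`, the bilinear identity reduces to the single coefficient condition
`A F (λ₀ + λ₁)² = B C (λ₀ − λ₁)²`, which the two-soliton coefficients satisfy.
-/

/-- `f ∂₊∂₋f − ∂₊f ∂₋f`, i.e. `½ D₊D₋(f·f)` in Hirota's notation. -/
noncomputable def hirota (f : ℝ × ℝ → ℂ) (p : ℝ × ℝ) : ℂ :=
  f p * dplus (dminus f) p - dplus f p * dminus f p

lemma hirota_div {f g : ℝ × ℝ → ℂ} {p : ℝ × ℝ}
    (hfy : ∀ x, DifferentiableAt ℝ (fun y => f (x, y)) p.2)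
    (hgy : ∀ x, DifferentiableAt ℝ (fun y => g (x, y)) p.2)
    (hfx : DifferentiableAt ℝ (fun x => f (x, p.2)) p.1)
    (hgx : DifferentiableAt ℝ (fun x => g (x, p.2)) p.1)
    (hfyx : DifferentiableAt ℝ (fun x => dminus f (x, p.2)) p.1)
    (hgyx : DifferentiableAt ℝ (fun x => dminus g (x, p.2)) p.1)
    (hgp : g p ≠ 0) :
    hirota (f / g) p = (g p ^ 2 * hirota f p - f p ^ 2 * hirota g p) / g p ^ 4 := by
  obtain ⟨x₀, y₀⟩ := p
  dsimp only at *
  have hdminus : ∀ x, g (x, y₀) ≠ 0 → dminus (f / g) (x, y₀) =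
      (dminus f (x, y₀) * g (x, y₀) - f (x, y₀) * dminus g (x, y₀)) / g (x, y₀) ^ 2 :=
    fun x hx => ((hfy x).hasDerivAt.div (hgy x).hasDerivAt hx).deriv
  have hdplus_dminus : dplus (dminus (f / g)) (x₀, y₀) =
      deriv (fun x => (dminus f (x, y₀) * g (x, y₀) - f (x, y₀) * dminus g (x, y₀)) /
        g (x, y₀) ^ 2) x₀ :=
    Filter.EventuallyEq.deriv_eq ((hgx.continuousAt.eventually_ne hgp).mono hdminus)
  have hdplus : dplus (f / g) (x₀, y₀) =
      (dplus f (x₀, y₀) * g (x₀, y₀) - f (x₀, y₀) * dplus g (x₀, y₀)) / g (x₀, y₀) ^ 2 :=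
    (hfx.hasDerivAt.div hgx.hasDerivAt hgp).deriv
  have hmixed : deriv (fun x => (dminus f (x, y₀) * g (x, y₀) - f (x, y₀) * dminus g (x, y₀)) /
        g (x, y₀) ^ 2) x₀ =
      (((dplus (dminus f) (x₀, y₀) * g (x₀, y₀) + dminus f (x₀, y₀) * dplus g (x₀, y₀)) -
          (dplus f (x₀, y₀) * dminus g (x₀, y₀) + f (x₀, y₀) * dplus (dminus g) (x₀, y₀))) *
          g (x₀, y₀) ^ 2 -
        (dminus f (x₀, y₀) * g (x₀, y₀) - f (x₀, y₀) * dminus g (x₀, y₀)) *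
          (2 * g (x₀, y₀) * dplus g (x₀, y₀))) / (g (x₀, y₀) ^ 2) ^ 2 := by
    refine ((((hfyx.hasDerivAt.mul hgx.hasDerivAt).sub
      (hfx.hasDerivAt.mul hgyx.hasDerivAt)).div (hgx.hasDerivAt.pow 2)
        (pow_ne_zero 2 hgp)).congr_deriv ?_).deriv
    simp only [Pi.mul_apply, Pi.sub_apply, Pi.pow_apply, Nat.cast_ofNat, Nat.add_one_sub_one,
      pow_one]
    rfl
  rw [hirota, hirota, hirota, hdplus_dminus, hdplus, hdminus x₀ hgp, hmixed, Pi.div_apply]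
  field_simp
  ring

noncomputable def expPoly (l₀ l₁ A B C F : ℂ) (p : ℝ × ℝ) : ℂ :=
  A + B * exp (eta l₀ p) + C * exp (eta l₁ p) + F * (exp (eta l₀ p) * exp (eta l₁ p))

lemma hasDerivAt_exp_eta_fst (l : ℂ) (x y : ℝ) :
    HasDerivAt (fun t : ℝ => exp (eta l (t, y))) (1 / (2 * l) * exp (eta l (x, y))) x := by
  have h : HasDerivAt (fun t : ℝ => (t : ℂ) / (2 * l) - 2 * l * y) (1 / (2 * l)) x := by
    simpa [one_div] using ((hasDerivAt_id x).ofReal_comp.div_const (2 * l)).sub_const (2 * l * y)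
  exact h.cexp.congr_deriv (mul_comm _ _)

lemma hasDerivAt_exp_eta_snd (l : ℂ) (x y : ℝ) :
    HasDerivAt (fun t : ℝ => exp (eta l (x, t))) (-(2 * l) * exp (eta l (x, y))) y := by
  have h : HasDerivAt (fun t : ℝ => (x : ℂ) / (2 * l) - 2 * l * t) (-(2 * l)) y := by
    simpa using ((hasDerivAt_id y).ofReal_comp.const_mul (2 * l)).const_sub ((x : ℂ) / (2 * l))
  exact h.cexp.congr_deriv (mul_comm _ _)

lemma hasDerivAt_expPoly_fst (l₀ l₁ A B C F : ℂ) (x y : ℝ) :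
    HasDerivAt (fun t : ℝ => expPoly l₀ l₁ A B C F (t, y))
      (expPoly l₀ l₁ 0 (1 / (2 * l₀) * B) (1 / (2 * l₁) * C)
        ((1 / (2 * l₀) + 1 / (2 * l₁)) * F) (x, y)) x := by
  have h₀ := hasDerivAt_exp_eta_fst l₀ x y
  have h₁ := hasDerivAt_exp_eta_fst l₁ x y
  refine ((((h₀.const_mul B).const_add A).add (h₁.const_mul C)).add
    ((h₀.mul h₁).const_mul F)).congr_deriv ?_
  simp only [expPoly]
  ring

lemma hasDerivAt_expPoly_snd (l₀ l₁ A B C F : ℂ) (x y : ℝ) :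
    HasDerivAt (fun t : ℝ => expPoly l₀ l₁ A B C F (x, t))
      (expPoly l₀ l₁ 0 (-(2 * l₀) * B) (-(2 * l₁) * C) (-(2 * l₀ + 2 * l₁) * F) (x, y)) y := by
  have h₀ := hasDerivAt_exp_eta_snd l₀ x y
  have h₁ := hasDerivAt_exp_eta_snd l₁ x y
  refine ((((h₀.const_mul B).const_add A).add (h₁.const_mul C)).add
    ((h₀.mul h₁).const_mul F)).congr_deriv ?_
  simp only [expPoly]
  ring

lemma dplus_expPoly (l₀ l₁ A B C F : ℂ) :
    dplus (expPoly l₀ l₁ A B C F) =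
      expPoly l₀ l₁ 0 (1 / (2 * l₀) * B) (1 / (2 * l₁) * C) ((1 / (2 * l₀) + 1 / (2 * l₁)) * F) :=
  funext fun p => (hasDerivAt_expPoly_fst l₀ l₁ A B C F p.1 p.2).deriv

lemma dminus_expPoly (l₀ l₁ A B C F : ℂ) :
    dminus (expPoly l₀ l₁ A B C F) =
      expPoly l₀ l₁ 0 (-(2 * l₀) * B) (-(2 * l₁) * C) (-(2 * l₀ + 2 * l₁) * F) :=
  funext fun p => (hasDerivAt_expPoly_snd l₀ l₁ A B C F p.1 p.2).deriv

lemma hirota_expPoly {l₀ l₁ A B C F : ℂ} (h₀ : l₀ ≠ 0) (h₁ : l₁ ≠ 0)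
    (h : A * F * (l₀ + l₁) ^ 2 = B * C * (l₀ - l₁) ^ 2) (p : ℝ × ℝ) :
    4 * hirota (expPoly l₀ l₁ A B C F) p =
      expPoly l₀ l₁ A (-B) (-C) F p ^ 2 - expPoly l₀ l₁ A B C F p ^ 2 := by
  simp only [hirota, dminus_expPoly, dplus_expPoly, expPoly]
  -- only the `e^{η₀+η₁}` coefficients differ, by `4 (B C (l₀ - l₁)² - A F (l₀ + l₁)²) / (l₀ l₁)`
  linear_combination (norm := skip) (-4 * exp (eta l₀ p) * exp (eta l₁ p) / (l₀ * l₁)) * h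
  field_simp
  ring

lemma hirota_expPoly_div_expPoly (l₀ l₁ A B C F A' B' C' F' : ℂ) {p : ℝ × ℝ}
    (hp : expPoly l₀ l₁ A' B' C' F' p ≠ 0) :
    hirota (expPoly l₀ l₁ A B C F / expPoly l₀ l₁ A' B' C' F') p =
      (expPoly l₀ l₁ A' B' C' F' p ^ 2 * hirota (expPoly l₀ l₁ A B C F) p -
        expPoly l₀ l₁ A B C F p ^ 2 * hirota (expPoly l₀ l₁ A' B' C' F') p) /
      expPoly l₀ l₁ A' B' C' F' p ^ 4 := by
  refine hirota_div (fun x => (hasDerivAt_expPoly_snd ..).differentiableAt)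
    (fun x => (hasDerivAt_expPoly_snd ..).differentiableAt)
    (hasDerivAt_expPoly_fst ..).differentiableAt (hasDerivAt_expPoly_fst ..).differentiableAt
    ?_ ?_ hp <;>
  · rw [dminus_expPoly]
    exact (hasDerivAt_expPoly_fst ..).differentiableAt

noncomputable def twoSolitonTau (l₀ l₁ a₀ a₁ c₀ c₁ : ℂ) : ℝ × ℝ → ℂ :=
  expPoly l₀ l₁ ((l₀ - l₁) * c₀ * c₁) ((l₀ + l₁) * a₀ * c₁) (-((l₀ + l₁) * a₁ * c₀))
    (-((l₀ - l₁) * a₀ * a₁))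

lemma hirota_twoSolitonTau {l₀ l₁ : ℂ} (h₀ : l₀ ≠ 0) (h₁ : l₁ ≠ 0) (a₀ a₁ c₀ c₁ : ℂ)
    (p : ℝ × ℝ) :
    4 * hirota (twoSolitonTau l₀ l₁ a₀ a₁ c₀ c₁) p =
      twoSolitonTau l₀ l₁ (-a₀) (-a₁) c₀ c₁ p ^ 2 - twoSolitonTau l₀ l₁ a₀ a₁ c₀ c₁ p ^ 2 := by
  rw [twoSolitonTau, hirota_expPoly h₀ h₁ (by ring)]
  simp only [twoSolitonTau, expPoly]
  ring

lemma sineGordon_twoSolitonTau_div {l₀ l₁ : ℂ} (h₀ : l₀ ≠ 0) (h₁ : l₁ ≠ 0) (a₀ a₁ c₀ c₁ : ℂ)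
    {p : ℝ × ℝ} (hp : twoSolitonTau l₀ l₁ (-a₀) (-a₁) c₀ c₁ p ≠ 0) :
    4 * hirota (twoSolitonTau l₀ l₁ a₀ a₁ c₀ c₁ / twoSolitonTau l₀ l₁ (-a₀) (-a₁) c₀ c₁) p =
      1 - (twoSolitonTau l₀ l₁ a₀ a₁ c₀ c₁ p / twoSolitonTau l₀ l₁ (-a₀) (-a₁) c₀ c₁ p) ^ 4 := by
  have hN := hirota_twoSolitonTau h₀ h₁ a₀ a₁ c₀ c₁ p
  have hD := hirota_twoSolitonTau h₀ h₁ (-a₀) (-a₁) c₀ c₁ p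
  rw [neg_neg, neg_neg] at hD
  set N := twoSolitonTau l₀ l₁ a₀ a₁ c₀ c₁
  set D := twoSolitonTau l₀ l₁ (-a₀) (-a₁) c₀ c₁
  have hquot : hirota (N / D) p = (D p ^ 2 * hirota N p - N p ^ 2 * hirota D p) / D p ^ 4 :=
    hirota_expPoly_div_expPoly _ _ _ _ _ _ _ _ _ _ hp
  rw [hquot]
  field_simp
  linear_combination D p ^ 2 * hN - N p ^ 2 * hD

lemma rTwoSoliton_eq_twoSolitonTau_div (κ₀ lam₀ b₀ c₀ κ₁ lam₁ b₁ c₁ : ℂ) :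
    rTwoSoliton κ₀ lam₀ b₀ c₀ κ₁ lam₁ b₁ c₁ =
      twoSolitonTau lam₀ lam₁ (b₀ / (2 * κ₀)) (b₁ / (2 * κ₁)) c₀ c₁ /
        twoSolitonTau lam₀ lam₁ (-(b₀ / (2 * κ₀))) (-(b₁ / (2 * κ₁))) c₀ c₁ := by
  funext p
  simp only [rTwoSoliton, Pi.div_apply, twoSolitonTau, expPoly, phiB, psiB]
  congr 1 <;> ring

lemma twoSolitonTau_neg_eq (κ₀ lam₀ b₀ c₀ κ₁ lam₁ b₁ c₁ : ℂ) (p : ℝ × ℝ) :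
    twoSolitonTau lam₀ lam₁ (-(b₀ / (2 * κ₀))) (-(b₁ / (2 * κ₁))) c₀ c₁ p =
      lam₀ * phiB κ₁ lam₁ b₁ c₁ p * psiB κ₀ lam₀ b₀ c₀ p -
        lam₁ * phiB κ₀ lam₀ b₀ c₀ p * psiB κ₁ lam₁ b₁ c₁ p := by
  simp only [twoSolitonTau, expPoly, phiB, psiB]
  ring

/-- on the set where the denominator of the two-soliton `r` is nonzero,
`4(r·∂₊∂₋r − ∂₊r·∂₋r) = 1 − r⁴`, i.e. `u = −i log r` solves
`∂₊∂₋u = −(1/2)sin(2u)`. -/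
theorem twoSoliton_solves_sineGordon (κ₀ κ₁ lam₀ lam₁ b₀ c₀ b₁ c₁ : ℂ)
    (hκ₀ : κ₀ ≠ 0) (hκ₁ : κ₁ ≠ 0) (hlam₀ : lam₀ = κ₀ ^ 2) (hlam₁ : lam₁ = κ₁ ^ 2)
    (p : ℝ × ℝ)
    (hden : lam₀ * phiB κ₁ lam₁ b₁ c₁ p * psiB κ₀ lam₀ b₀ c₀ p -
        lam₁ * phiB κ₀ lam₀ b₀ c₀ p * psiB κ₁ lam₁ b₁ c₁ p ≠ 0) :
    4 * (rTwoSoliton κ₀ lam₀ b₀ c₀ κ₁ lam₁ b₁ c₁ p *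
          dplus (fun q => dminus (rTwoSoliton κ₀ lam₀ b₀ c₀ κ₁ lam₁ b₁ c₁) q) p -
        dplus (rTwoSoliton κ₀ lam₀ b₀ c₀ κ₁ lam₁ b₁ c₁) p *
          dminus (rTwoSoliton κ₀ lam₀ b₀ c₀ κ₁ lam₁ b₁ c₁) p) =
      1 - (rTwoSoliton κ₀ lam₀ b₀ c₀ κ₁ lam₁ b₁ c₁ p) ^ 4 := by
  have hl₀ : lam₀ ≠ 0 := hlam₀ ▸ pow_ne_zero 2 hκ₀
  have hl₁ : lam₁ ≠ 0 := hlam₁ ▸ pow_ne_zero 2 hκ₁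
  rw [← twoSolitonTau_neg_eq] at hden
  change 4 * hirota (rTwoSoliton κ₀ lam₀ b₀ c₀ κ₁ lam₁ b₁ c₁) p = _
  rw [rTwoSoliton_eq_twoSolitonTau_div]
  exact sineGordon_twoSolitonTau_div hl₀ hl₁ _ _ c₀ c₁ hden
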